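/- arXiv:2412.05058 — 2 statements merged into one kernel-verified Lean document; each statement's English description precedes it below -/
import Mathlib

section
/- Let k₀ > 0, α ∈ (0, π), and ψ ∈ [0, π]. For every φ' ∈ [0, π], ω(ψ, φ') ≤ ω(ψ, π/2), i.e., for any fixed polar angle ψ the local spatial bandwidth over φ' ∈ [0, π] is maximized at φ' = π/2. -/
open Real Set

/-- The maximum spatial frequency `F^max`: the supremum over γ ∈ [−α/2, α/2]
of sin ψ · cos (γ − φ'). -/
noncomputable def Fmax (α ψ φ' : ℝ) : ℝ :=
  sSup ((fun γ => Real.sin ψ * Real.cos (γ - φ')) '' Set.Icc (-(α / 2)) (α / 2))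

/-- The minimum spatial frequency `F^min`: the infimum over γ ∈ [−α/2, α/2]
of sin ψ · cos (γ − φ'). -/
noncomputable def Fmin (α ψ φ' : ℝ) : ℝ :=
  sInf ((fun γ => Real.sin ψ * Real.cos (γ - φ')) '' Set.Icc (-(α / 2)) (α / 2))

/-- The local spatial bandwidth ω(ψ, φ') = k₀ · (F^max − F^min). -/
noncomputable def omegaBW (k₀ α ψ φ' : ℝ) : ℝ :=
  k₀ * (Fmax α ψ φ' - Fmin α ψ φ')

lemma cos_diff_le (α φ' : ℝ) (hα : α ∈ Set.Ioo 0 π)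
    {γ γ' : ℝ} (hγ : γ ∈ Set.Icc (-(α / 2)) (α / 2))
    (hγ' : γ' ∈ Set.Icc (-(α / 2)) (α / 2)) :
    Real.cos (γ - φ') - Real.cos (γ' - φ') ≤ 2 * Real.sin (α / 2) := by
  rw [Real.cos_sub_cos]
  set p := ((γ - φ') + (γ' - φ')) / 2
  have hq : ((γ - φ') - (γ' - φ')) / 2 = (γ - γ') / 2 := by ring
  rw [hq]
  set q := (γ - γ') / 2 with hqdef
  have hqabs : |q| ≤ α / 2 := by
    rw [hqdef, abs_div, abs_of_pos (by norm_num : (0:ℝ) < 2)]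
    rw [div_le_iff₀ (by norm_num : (0:ℝ) < 2)]
    rw [abs_sub_le_iff]
    constructor <;> [linarith [hγ.1, hγ.2, hγ'.1, hγ'.2]; linarith [hγ.1, hγ.2, hγ'.1, hγ'.2]]
  have hsinq : |Real.sin q| ≤ Real.sin (α / 2) := by
    have h1 : |Real.sin q| = Real.sin |q| := by
      rcases abs_cases q with ⟨h, h0⟩ | ⟨h, h0⟩
      · rw [h, abs_of_nonneg (Real.sin_nonneg_of_nonneg_of_le_pi h0 (by
          linarith [hα.2, hqabs, abs_nonneg q, pi_pos]))]
      · rw [h, Real.sin_neg, abs_of_nonpos (Real.sin_nonpos_of_nonpos_of_neg_pi_le h0.le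
          (by rw [h] at hqabs; linarith [pi_pos, hα.2]))]
    rw [h1]
    exact Real.sin_le_sin_of_le_of_le_pi_div_two (by linarith [abs_nonneg q, pi_pos])
      (by linarith [hα.2]) hqabs
  have hp : |Real.sin p| ≤ 1 := Real.abs_sin_le_one p
  calc -2 * Real.sin p * Real.sin q ≤ 2 * (|Real.sin p| * |Real.sin q|) := by
        have := abs_mul (Real.sin p) (Real.sin q)
        nlinarith [neg_abs_le (Real.sin p * Real.sin q)]
    _ ≤ 2 * Real.sin (α / 2) := by nlinarith [abs_nonneg (Real.sin q)]

/-- for fixed ψ ∈ [0,π], the local spatial bandwidth over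
φ' ∈ [0,π] is maximized at φ' = π/2. -/
theorem omegaBW_le_azimuth_half_pi (k₀ α ψ : ℝ) (hk : 0 < k₀)
    (hα : α ∈ Set.Ioo 0 π) (hψ : ψ ∈ Set.Icc 0 π) :
    ∀ φ' ∈ Set.Icc (0 : ℝ) π, omegaBW k₀ α ψ φ' ≤ omegaBW k₀ α ψ (π / 2) := by
  intro φ' _
  have hs : 0 ≤ Real.sin ψ := Real.sin_nonneg_of_nonneg_of_le_pi hψ.1 hψ.2
  have hIcc : (-(α / 2)) ≤ α / 2 := by linarith [hα.1]
  have hmem : (α / 2) ∈ Set.Icc (-(α / 2)) (α / 2) := ⟨by linarith [hα.1], le_refl _⟩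
  have hmem' : (-(α / 2)) ∈ Set.Icc (-(α / 2)) (α / 2) := ⟨le_refl _, by linarith [hα.1]⟩
  -- boundedness and nonemptiness of images
  have key : ∀ χ : ℝ,
      (Set.Nonempty ((fun γ => Real.sin ψ * Real.cos (γ - χ)) '' Set.Icc (-(α / 2)) (α / 2))) ∧
      BddAbove ((fun γ => Real.sin ψ * Real.cos (γ - χ)) '' Set.Icc (-(α / 2)) (α / 2)) ∧
      BddBelow ((fun γ => Real.sin ψ * Real.cos (γ - χ)) '' Set.Icc (-(α / 2)) (α / 2)) := by
    intro χ
    have hcompact : IsCompact ((fun γ => Real.sin ψ * Real.cos (γ - χ)) ''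
        Set.Icc (-(α / 2)) (α / 2)) :=
      isCompact_Icc.image (by continuity)
    exact ⟨(Set.nonempty_Icc.2 hIcc).image _, hcompact.bddAbove, hcompact.bddBelow⟩
  obtain ⟨hne, hba, hbb⟩ := key φ'
  obtain ⟨hne2, hba2, hbb2⟩ := key (π / 2)
  -- bound for general φ'
  have hub : Fmax α ψ φ' - Fmin α ψ φ' ≤ Real.sin ψ * (2 * Real.sin (α / 2)) := by
    rw [sub_le_iff_le_add]
    apply csSup_le hne
    rintro x ⟨γ, hγ, rfl⟩
    have h2 : Real.sin ψ * Real.cos (γ - φ') - Real.sin ψ * (2 * Real.sin (α / 2)) ≤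
        Fmin α ψ φ' := by
      apply le_csInf hne
      rintro y ⟨γ', hγ', rfl⟩
      have := cos_diff_le α φ' hα hγ hγ'
      simp only
      nlinarith
    simp only
    linarith
  -- values at π/2
  have hFmax : Real.sin ψ * Real.sin (α / 2) ≤ Fmax α ψ (π / 2) := by
    apply le_csSup hba2
    exact ⟨α / 2, hmem, by simp only; rw [Real.cos_sub_pi_div_two]⟩
  have hFmin : Fmin α ψ (π / 2) ≤ -(Real.sin ψ * Real.sin (α / 2)) := by
    apply csInf_le hbb2
    refine ⟨-(α / 2), hmem', ?_⟩
    simp only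
    rw [show -(α / 2) - π / 2 = -(π / 2 + α / 2) by ring, Real.cos_neg, Real.cos_add]
    simp
  unfold omegaBW
  apply mul_le_mul_of_nonneg_left _ hk.le
  nlinarith
end

section
/- Let k₀ > 0, α ∈ (0, π), and L_p > 0. The supremum over ψ ∈ [0, π] and φ' ∈ [0, π] of the approximate K number K₂(ψ, φ') = (L_p / (2π)) · ω(ψ, φ') equals (k₀ · L_p / π) · sin(α/2). -/
open Real Set

lemma abs_sin_le {α t : ℝ} (hα : α ∈ Set.Ioo 0 π) (ht : |t| ≤ α / 2) :
    |Real.sin t| ≤ Real.sin (α / 2) := by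
  have hπ := Real.pi_pos
  have hα2 : α / 2 ≤ π / 2 := by linarith [hα.2]
  have htp : |t| ≤ π := by linarith
  have h1 : Real.sin |t| ≤ Real.sin (α / 2) :=
    Real.sin_le_sin_of_le_of_le_pi_div_two (by linarith [abs_nonneg t]) hα2 ht
  have heq : |Real.sin t| = Real.sin |t| := by
    rcases abs_cases t with ⟨h, ht0⟩ | ⟨h, ht0⟩
    · rw [h, abs_of_nonneg (Real.sin_nonneg_of_nonneg_of_le_pi ht0 (by rw [← h]; exact htp))]
    · have hmt : -t ≤ π := by rw [← h]; exact htp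
      rw [h, Real.sin_neg, abs_of_nonpos (Real.sin_nonpos_of_nonpos_of_neg_pi_le ht0.le
        (by linarith))]
  rw [heq]; exact h1

lemma key_ineq {α ψ : ℝ} (hα : α ∈ Set.Ioo 0 π) (hψ : ψ ∈ Set.Icc (0:ℝ) π)
    (φ' : ℝ) {γ₁ γ₂ : ℝ} (h1 : γ₁ ∈ Set.Icc (-(α/2)) (α/2))
    (h2 : γ₂ ∈ Set.Icc (-(α/2)) (α/2)) :
    Real.sin ψ * Real.cos (γ₁ - φ') - Real.sin ψ * Real.cos (γ₂ - φ')
      ≤ 2 * Real.sin (α / 2) := by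
  have hs0 : 0 ≤ Real.sin ψ := Real.sin_nonneg_of_nonneg_of_le_pi hψ.1 hψ.2
  have hs1 : Real.sin ψ ≤ 1 := Real.sin_le_one ψ
  have hc : Real.cos (γ₁ - φ') - Real.cos (γ₂ - φ')
      = -2 * Real.sin (((γ₁ - φ') + (γ₂ - φ')) / 2)
          * Real.sin ((γ₁ - γ₂) / 2) := by
    rw [Real.cos_sub_cos]; ring_nf
  have habs : |Real.sin ((γ₁ - γ₂) / 2)| ≤ Real.sin (α / 2) := by
    apply abs_sin_le hα
    rw [abs_div, abs_two]
    rw [div_le_iff₀ (by norm_num : (0:ℝ) < 2)]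
    have := h1.1; have := h1.2; have := h2.1; have := h2.2
    rw [abs_le]; constructor <;> linarith
  have hb : Real.cos (γ₁ - φ') - Real.cos (γ₂ - φ') ≤ 2 * Real.sin (α / 2) := by
    rw [hc]
    calc -2 * Real.sin (((γ₁ - φ') + (γ₂ - φ')) / 2) * Real.sin ((γ₁ - γ₂) / 2)
        ≤ |(-2) * Real.sin (((γ₁ - φ') + (γ₂ - φ')) / 2) * Real.sin ((γ₁ - γ₂) / 2)| :=
          le_abs_self _
      _ = 2 * (|Real.sin (((γ₁ - φ') + (γ₂ - φ')) / 2)| * |Real.sin ((γ₁ - γ₂) / 2)|) := by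
          rw [abs_mul, abs_mul]; norm_num; ring
      _ ≤ 2 * (1 * Real.sin (α / 2)) := by
          apply mul_le_mul_of_nonneg_left _ (by norm_num)
          exact mul_le_mul (Real.abs_sin_le_one _) habs (abs_nonneg _) zero_le_one
      _ = 2 * Real.sin (α / 2) := by ring
  have hsa : 0 ≤ Real.sin (α / 2) :=
    Real.sin_nonneg_of_nonneg_of_le_pi (by linarith [hα.1]) (by linarith [hα.2, Real.pi_pos])
  calc Real.sin ψ * Real.cos (γ₁ - φ') - Real.sin ψ * Real.cos (γ₂ - φ')
      = Real.sin ψ * (Real.cos (γ₁ - φ') - Real.cos (γ₂ - φ')) := by ring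
    _ ≤ 1 * (2 * Real.sin (α / 2)) := by
        rcases le_or_gt (Real.cos (γ₁ - φ') - Real.cos (γ₂ - φ')) 0 with h | h
        · nlinarith
        · nlinarith
    _ = 2 * Real.sin (α / 2) := by ring

lemma img_ne {α ψ φ' : ℝ} (hα : 0 < α) :
    ((fun γ => Real.sin ψ * Real.cos (γ - φ')) '' Set.Icc (-(α/2)) (α/2)).Nonempty :=
  (Set.nonempty_Icc.mpr (by linarith)).image _

lemma img_bddAbove (α ψ φ' : ℝ) :
    BddAbove ((fun γ => Real.sin ψ * Real.cos (γ - φ')) '' Set.Icc (-(α/2)) (α/2)) := by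
  refine ⟨1, fun x ⟨γ, _, hx⟩ => ?_⟩
  rw [← hx]
  calc Real.sin ψ * Real.cos (γ - φ') ≤ |Real.sin ψ * Real.cos (γ - φ')| := le_abs_self _
    _ = |Real.sin ψ| * |Real.cos (γ - φ')| := abs_mul _ _
    _ ≤ 1 * 1 := mul_le_mul (Real.abs_sin_le_one _) (Real.abs_cos_le_one _) (abs_nonneg _) zero_le_one
    _ = 1 := by ring

lemma img_bddBelow (α ψ φ' : ℝ) :
    BddBelow ((fun γ => Real.sin ψ * Real.cos (γ - φ')) '' Set.Icc (-(α/2)) (α/2)) := by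
  refine ⟨-1, fun x ⟨γ, _, hx⟩ => ?_⟩
  rw [← hx]
  show -1 ≤ Real.sin ψ * Real.cos (γ - φ')
  have : |Real.sin ψ * Real.cos (γ - φ')| ≤ 1 := by
    rw [abs_mul]
    calc |Real.sin ψ| * |Real.cos (γ - φ')|
        ≤ 1 * 1 := mul_le_mul (Real.abs_sin_le_one _) (Real.abs_cos_le_one _) (abs_nonneg _) zero_le_one
      _ = 1 := by ring
  linarith [neg_abs_le (Real.sin ψ * Real.cos (γ - φ'))]

lemma Fdiff_le {α ψ : ℝ} (hα : α ∈ Set.Ioo 0 π) (hψ : ψ ∈ Set.Icc (0:ℝ) π) (φ' : ℝ) :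
    Fmax α ψ φ' - Fmin α ψ φ' ≤ 2 * Real.sin (α / 2) := by
  rw [sub_le_iff_le_add]
  apply csSup_le (img_ne hα.1)
  rintro x ⟨γ₁, hγ₁, rfl⟩
  rw [← sub_le_iff_le_add']
  apply le_csInf (img_ne hα.1)
  rintro y ⟨γ₂, hγ₂, rfl⟩
  have := key_ineq hα hψ φ' hγ₁ hγ₂
  simp only at *
  linarith

lemma Fmax_pt {α : ℝ} (hα : α ∈ Set.Ioo 0 π) :
    Fmax α (π/2) (π/2) = Real.sin (α/2) := by
  have hrw : (fun γ => Real.sin (π/2) * Real.cos (γ - π/2)) = fun γ => Real.sin γ := by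
    funext γ; rw [Real.sin_pi_div_two, Real.cos_sub_pi_div_two, one_mul]
  unfold Fmax
  rw [hrw]
  apply le_antisymm
  · apply csSup_le ((Set.nonempty_Icc.mpr (by linarith [hα.1])).image _)
    rintro x ⟨γ, hγ, rfl⟩
    exact Real.sin_le_sin_of_le_of_le_pi_div_two (by linarith [hγ.1, hα.2]) (by linarith [hα.2]) hγ.2
  · apply le_csSup
    · refine ⟨1, fun x ⟨γ, _, hx⟩ => ?_⟩
      rw [← hx]; exact Real.sin_le_one γ
    · exact ⟨α/2, ⟨by linarith [hα.1], le_refl _⟩, rfl⟩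

lemma Fmin_pt {α : ℝ} (hα : α ∈ Set.Ioo 0 π) :
    Fmin α (π/2) (π/2) = -Real.sin (α/2) := by
  have hrw : (fun γ => Real.sin (π/2) * Real.cos (γ - π/2)) = fun γ => Real.sin γ := by
    funext γ; rw [Real.sin_pi_div_two, Real.cos_sub_pi_div_two, one_mul]
  unfold Fmin
  rw [hrw]
  apply le_antisymm
  · apply csInf_le
    · refine ⟨-1, fun x ⟨γ, _, hx⟩ => ?_⟩
      rw [← hx]; exact Real.neg_one_le_sin γ
    · exact ⟨-(α/2), ⟨le_refl _, by linarith [hα.1]⟩, by simp [Real.sin_neg]⟩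
  · apply le_csInf ((Set.nonempty_Icc.mpr (by linarith [hα.1])).image _)
    rintro x ⟨γ, hγ, rfl⟩
    have : Real.sin (-(α/2)) ≤ Real.sin γ :=
      Real.sin_le_sin_of_le_of_le_pi_div_two (by linarith [hα.2]) (by linarith [hγ.2, hα.2]) hγ.1
    rwa [Real.sin_neg] at this

/-- the supremum over ψ ∈ [0,π], φ' ∈ [0,π] of the approximate
K number K₂(ψ, φ') = (L_p / (2π)) · ω(ψ, φ') equals (k₀ L_p / π) sin(α/2). -/
theorem K2_sup (k₀ α Lp : ℝ) (hk : 0 < k₀) (hα : α ∈ Set.Ioo 0 π)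
    (hL : 0 < Lp) :
    sSup {x : ℝ | ∃ ψ ∈ Set.Icc (0 : ℝ) π, ∃ φ' ∈ Set.Icc (0 : ℝ) π,
        x = Lp / (2 * π) * omegaBW k₀ α ψ φ'}
      = k₀ * Lp / π * Real.sin (α / 2) := by
  have hπ : (0:ℝ) < π := Real.pi_pos
  have hπ2 : π / 2 ∈ Set.Icc (0:ℝ) π := ⟨by linarith, by linarith⟩
  have hval : Lp / (2 * π) * omegaBW k₀ α (π/2) (π/2)
      = k₀ * Lp / π * Real.sin (α / 2) := by
    unfold omegaBW
    rw [Fmax_pt hα, Fmin_pt hα]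
    field_simp
    ring
  apply IsGreatest.csSup_eq
  constructor
  · exact ⟨π/2, hπ2, π/2, hπ2, hval.symm⟩
  · rintro x ⟨ψ, hψ, φ', hφ', rfl⟩
    unfold omegaBW
    rw [← hval]
    unfold omegaBW
    rw [Fmax_pt hα, Fmin_pt hα]
    have h1 := Fdiff_le hα hψ φ'
    have hc : 0 ≤ Lp / (2 * π) * k₀ := by positivity
    have : Lp / (2 * π) * (k₀ * (Fmax α ψ φ' - Fmin α ψ φ'))
        ≤ Lp / (2 * π) * (k₀ * (2 * Real.sin (α/2))) := by nlinarith
    calc Lp / (2 * π) * (k₀ * (Fmax α ψ φ' - Fmin α ψ φ'))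
        ≤ Lp / (2 * π) * (k₀ * (2 * Real.sin (α/2))) := this
      _ = Lp / (2 * π) * (k₀ * (Real.sin (α/2) - -Real.sin (α/2))) := by ring
end
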